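/- arXiv:1807.01676 — 5 statements merged into one kernel-verified Lean document; each statement's English description precedes it below -/
import Mathlib

section
/- Let a,b,c,d,e,f,g be positive reals and define Δ = (ad - g²)(bc - f²) - e²(ab + cd - e² + 2fg), α = e²(b(ad - g²) - de²)(b(cd - e²) - df²), γ = e²(a(bc - f²) - ce²)(a(cd - e²) - cg²), and β = Δ(Δ + e²(ab + cd + 4fg)) + 2e⁴(abfg + adf² + bcg² + cdfg). Then β² - 4αγ = Δ(Δ + 4e²fg)·((ad - g²)(bc - f²) - e⁴)². -/
theorem stmt_3_general (a b c d e f g : ℝ) :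
    let Δ := (a * d - g ^ 2) * (b * c - f ^ 2) - e ^ 2 * (a * b + c * d - e ^ 2 + 2 * f * g)
    let α := e ^ 2 * (b * (a * d - g ^ 2) - d * e ^ 2) * (b * (c * d - e ^ 2) - d * f ^ 2)
    let γ := e ^ 2 * (a * (b * c - f ^ 2) - c * e ^ 2) * (a * (c * d - e ^ 2) - c * g ^ 2)
    let β := Δ * (Δ + e ^ 2 * (a * b + c * d + 4 * f * g)) +
      2 * e ^ 4 * (a * b * f * g + a * d * f ^ 2 + b * c * g ^ 2 + c * d * f * g)
    β ^ 2 - 4 * α * γ =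
      Δ * (Δ + 4 * e ^ 2 * f * g) * ((a * d - g ^ 2) * (b * c - f ^ 2) - e ^ 4) ^ 2 := by
  intro Δ α γ β
  ring

theorem stmt_3 (a b c d e f g : ℝ)
    (ha : 0 < a) (hb : 0 < b) (hc : 0 < c) (hd : 0 < d)
    (he : 0 < e) (hf : 0 < f) (hg : 0 < g) :
    let Δ := (a * d - g ^ 2) * (b * c - f ^ 2) - e ^ 2 * (a * b + c * d - e ^ 2 + 2 * f * g)
    let α := e ^ 2 * (b * (a * d - g ^ 2) - d * e ^ 2) * (b * (c * d - e ^ 2) - d * f ^ 2)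
    let γ := e ^ 2 * (a * (b * c - f ^ 2) - c * e ^ 2) * (a * (c * d - e ^ 2) - c * g ^ 2)
    let β := Δ * (Δ + e ^ 2 * (a * b + c * d + 4 * f * g)) +
      2 * e ^ 4 * (a * b * f * g + a * d * f ^ 2 + b * c * g ^ 2 + c * d * f * g)
    β ^ 2 - 4 * α * γ =
      Δ * (Δ + 4 * e ^ 2 * f * g) * ((a * d - g ^ 2) * (b * c - f ^ 2) - e ^ 4) ^ 2 :=
  stmt_3_general a b c d e f g
end

section
/- Let r ≥ 0, α₁,α₂,α₃,α₄ ≥ 0, β₁,β₂,β₃ ≥ 0. Then (α₁²α₄²β₂²(β₁² + β₃²)) + (α₃²α₄²β₁²(β₂² + β₁²r²)) + r²(α₂α₃β₁² - α₁²β₂β₃)² equals (ad - g²)(bc - f²) - e²(ab + cd - e² + 2fg), where a = r²α₁² + α₂² + α₄², b = β₁² + β₃², c = α₁² + α₃², d = r²β₁² + β₂², e = rα₁β₁, f = α₃β₃, g = α₂β₂. In particular this quantity Δ is nonnegative, and it is strictly positive when all of α₁,α₂,α₃,α₄,β₁,β₂,β₃ and r are strictly positive. -/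
theorem stmt_4_general (r α₁ α₂ α₃ α₄ β₁ β₂ β₃ : ℝ) :
    let a := r ^ 2 * α₁ ^ 2 + α₂ ^ 2 + α₄ ^ 2
    let b := β₁ ^ 2 + β₃ ^ 2
    let c := α₁ ^ 2 + α₃ ^ 2
    let d := r ^ 2 * β₁ ^ 2 + β₂ ^ 2
    let e := r * α₁ * β₁
    let f := α₃ * β₃
    let g := α₂ * β₂
    let Δ := (a * d - g ^ 2) * (b * c - f ^ 2) - e ^ 2 * (a * b + c * d - e ^ 2 + 2 * f * g)
    (α₁ ^ 2 * α₄ ^ 2 * β₂ ^ 2 * (β₁ ^ 2 + β₃ ^ 2)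
      + α₃ ^ 2 * α₄ ^ 2 * β₁ ^ 2 * (β₂ ^ 2 + β₁ ^ 2 * r ^ 2)
      + r ^ 2 * (α₂ * α₃ * β₁ ^ 2 - α₁ ^ 2 * β₂ * β₃) ^ 2 = Δ) ∧
    0 ≤ Δ ∧
    (0 < α₁ → 0 < α₂ → 0 < α₃ → 0 < α₄ → 0 < β₁ → 0 < β₂ → 0 < β₃ → 0 < r → 0 < Δ) := by
  intro a b c d e f g Δ
  have sum_sq_eq : α₁ ^ 2 * α₄ ^ 2 * β₂ ^ 2 * (β₁ ^ 2 + β₃ ^ 2)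
      + α₃ ^ 2 * α₄ ^ 2 * β₁ ^ 2 * (β₂ ^ 2 + β₁ ^ 2 * r ^ 2)
      + r ^ 2 * (α₂ * α₃ * β₁ ^ 2 - α₁ ^ 2 * β₂ * β₃) ^ 2 = Δ := by
    simp only [Δ, a, b, c, d, e, f, g]
    ring
  refine ⟨sum_sq_eq, sum_sq_eq ▸ by positivity, ?_⟩
  intro hα₁ _ _ hα₄ hβ₁ hβ₂ _ _
  rw [← sum_sq_eq]
  positivity

theorem stmt_4 (r α₁ α₂ α₃ α₄ β₁ β₂ β₃ : ℝ)
    (hr : 0 ≤ r) (h1 : 0 ≤ α₁) (h2 : 0 ≤ α₂) (h3 : 0 ≤ α₃) (h4 : 0 ≤ α₄)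
    (g1 : 0 ≤ β₁) (g2 : 0 ≤ β₂) (g3 : 0 ≤ β₃) :
    let a := r ^ 2 * α₁ ^ 2 + α₂ ^ 2 + α₄ ^ 2
    let b := β₁ ^ 2 + β₃ ^ 2
    let c := α₁ ^ 2 + α₃ ^ 2
    let d := r ^ 2 * β₁ ^ 2 + β₂ ^ 2
    let e := r * α₁ * β₁
    let f := α₃ * β₃
    let g := α₂ * β₂
    let Δ := (a * d - g ^ 2) * (b * c - f ^ 2) - e ^ 2 * (a * b + c * d - e ^ 2 + 2 * f * g)
    (α₁ ^ 2 * α₄ ^ 2 * β₂ ^ 2 * (β₁ ^ 2 + β₃ ^ 2)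
      + α₃ ^ 2 * α₄ ^ 2 * β₁ ^ 2 * (β₂ ^ 2 + β₁ ^ 2 * r ^ 2)
      + r ^ 2 * (α₂ * α₃ * β₁ ^ 2 - α₁ ^ 2 * β₂ * β₃) ^ 2 = Δ) ∧
    0 ≤ Δ ∧
    (0 < α₁ → 0 < α₂ → 0 < α₃ → 0 < α₄ → 0 < β₁ → 0 < β₂ → 0 < β₃ → 0 < r → 0 < Δ) :=
  stmt_4_general r α₁ α₂ α₃ α₄ β₁ β₂ β₃
end

section
/- There is no 4×4 unitary matrix U = (u_{ij}) such that the operators Lᵢ = Σⱼ u_{ij}Kⱼ, where K₁ = (1/2)[[1,1],[0,0]], K₂ = (1/2)[[0,0],[1,-1]], K₃ = (1/2)[[1,0],[0,1]], K₄ = (1/2)[[0,1],[1,0]], are all of one of the four forms [[*,0],[0,*]], [[0,*],[*,0]], [[*,0],[0,0]], [[0,0],[*,0]] (diagonal, antidiagonal, or single-entry matrices with entries from ℂ). -/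
/-!
If every `Lᵢ = ∑ⱼ uᵢⱼ Kⱼ` is of SIO form, then every row `u` of `U` has one of the shapes
`(a, a, b, -a)` (when `Lᵢ` is diagonal) or `(a, -a, -a, c)` (when `Lᵢ` is antidiagonal); the two
single-entry forms are special cases of these. The sesquilinear form
`q(u) = ∑ₐ,ᵦ uₐ Mₐᵦ conj uᵦ` of `M = witnessForm` vanishes on both shapes, so every diagonal entry
of `U M Uᴴ` is zero. But `U` is unitary, so `tr (U M Uᴴ) = tr M = 2`.
-/

open Matrix

/-- A 2×2 matrix is of one of the four forms [[*,0],[0,*]], [[0,*],[*,0]],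
[[*,0],[0,0]], [[0,0],[*,0]]. -/
def SIOform (M : Matrix (Fin 2) (Fin 2) ℂ) : Prop :=
  (M 0 1 = 0 ∧ M 1 0 = 0) ∨                             -- diagonal
  (M 0 0 = 0 ∧ M 1 1 = 0) ∨                             -- antidiagonal
  (M 0 1 = 0 ∧ M 1 0 = 0 ∧ M 1 1 = 0) ∨                 -- [[*,0],[0,0]]
  (M 0 0 = 0 ∧ M 0 1 = 0 ∧ M 1 1 = 0)                   -- [[0,0],[*,0]]

theorem trace_unitary_conj {n R : Type*} [Fintype n] [DecidableEq n] [CommRing R] [StarRing R]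
    {U : Matrix n n R} (hU : U ∈ unitaryGroup n R) (M : Matrix n n R) :
    trace (U * M * star U) = trace M := by
  rw [trace_mul_cycle, mem_unitaryGroup_iff'.mp hU, one_mul]

theorem mul_mul_star_apply_self {n R : Type*} [Fintype n] [NonUnitalSemiring R] [Star R]
    (U M : Matrix n n R) (i : n) :
    (U * M * star U) i i = ∑ a, ∑ b, U i a * M a b * star (U i b) := by
  simp only [mul_apply, star_apply, Finset.sum_mul]
  exact Finset.sum_comm

noncomputable def krausK : Fin 4 → Matrix (Fin 2) (Fin 2) ℂ :=
  ![(1 / 2 : ℂ) • !![1, 1; 0, 0],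
    (1 / 2 : ℂ) • !![0, 0; 1, -1],
    (1 / 2 : ℂ) • !![1, 0; 0, 1],
    (1 / 2 : ℂ) • !![0, 1; 1, 0]]

theorem sum_smul_krausK (u : Fin 4 → ℂ) :
    ∑ j, u j • krausK j = (1 / 2 : ℂ) • !![u 0 + u 2, u 0 + u 3; u 1 + u 3, -u 1 + u 2] := by
  ext a b
  fin_cases a <;> fin_cases b <;>
    simp [krausK, Fin.sum_univ_four, mul_add, mul_comm]

theorem row_shape_of_SIOform_sum_smul_krausK {u : Fin 4 → ℂ}
    (h : SIOform (∑ j, u j • krausK j)) :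
    (u 1 = u 0 ∧ u 3 = -u 0) ∨ (u 1 = -u 0 ∧ u 2 = -u 0) := by
  simp only [SIOform, sum_smul_krausK, one_div, Matrix.smul_apply, of_apply, cons_val', cons_val_one,
    cons_val_fin_one, cons_val_zero, smul_eq_mul, mul_eq_zero, inv_eq_zero, OfNat.ofNat_ne_zero,
    false_or] at h
  rcases h with ⟨h03, h13⟩ | ⟨h02, h12⟩ | ⟨h03, h13, -⟩ | ⟨h02, -, h12⟩
  · exact Or.inl ⟨by linear_combination h13 - h03, by linear_combination h03⟩
  · exact Or.inr ⟨by linear_combination h02 - h12, by linear_combination h02⟩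
  · exact Or.inl ⟨by linear_combination h13 - h03, by linear_combination h03⟩
  · exact Or.inr ⟨by linear_combination h02 - h12, by linear_combination h02⟩

def witnessForm : Matrix (Fin 4) (Fin 4) ℂ :=
  !![2, 0, 0, 0; 0, 0, 0, 0; 1, -1, 0, 0; 1, 1, 0, 0]

theorem trace_witnessForm : trace witnessForm = 2 := by
  simp [trace, Fin.sum_univ_four, witnessForm]

theorem witnessForm_form_eq_zero {u : Fin 4 → ℂ}
    (h : (u 1 = u 0 ∧ u 3 = -u 0) ∨ (u 1 = -u 0 ∧ u 2 = -u 0)) :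
    ∑ a, ∑ b, u a * witnessForm a b * star (u b) = 0 := by
  simp only [witnessForm, Fin.sum_univ_four, cons_val_zero, cons_val_one, cons_val, of_apply,
    mul_zero, zero_mul, add_zero, mul_one, mul_neg, neg_mul]
  rcases h with ⟨h1, h3⟩ | ⟨h1, h2⟩
  · rw [h1, h3]; ring
  · rw [h1, h2, star_neg]; ring

theorem stmt_9 :
    let K : Fin 4 → Matrix (Fin 2) (Fin 2) ℂ :=
      ![(1 / 2 : ℂ) • !![1, 1; 0, 0],
        (1 / 2 : ℂ) • !![0, 0; 1, -1],
        (1 / 2 : ℂ) • !![1, 0; 0, 1],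
        (1 / 2 : ℂ) • !![0, 1; 1, 0]]
    ¬ ∃ U ∈ Matrix.unitaryGroup (Fin 4) ℂ,
        ∀ i : Fin 4, SIOform (∑ j : Fin 4, U i j • K j) := by
  rintro K ⟨U, hU, hL⟩
  have hdiag : ∀ i, (U * witnessForm * star U) i i = 0 := fun i => by
    rw [mul_mul_star_apply_self]
    exact witnessForm_form_eq_zero (row_shape_of_SIOform_sum_smul_krausK (hL i))
  have htrace : trace (U * witnessForm * star U) = 0 := Finset.sum_eq_zero fun i _ => hdiag i
  rw [trace_unitary_conj hU, trace_witnessForm] at htrace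
  exact two_ne_zero htrace
end

section
/- For θ ∈ (0, π/2) and φ ∈ ℝ, the 2×2 real orthogonal matrix U = [[cos θ, sin θ],[sin θ, -cos θ]] transforms the pair of Kraus operators K₁ = [[cos θ, sin θ·e^{iφ}],[0,0]], K₂ = [[sin θ, -cos θ·e^{iφ}],[0,0]] (via Lᵢ = Σⱼ u_{ij}Kⱼ) into the pair [[1, 0],[0,0]], [[0, e^{iφ}],[0,0]], both of which are strictly incoherent (each has at most one nonzero entry). -/
open Matrix Complex

section KrausMixing

variable {R : Type*} [CommRing R] {c s : R}

theorem smul_add_smul_kraus_eq_single (h : c ^ 2 + s ^ 2 = 1) (z : R) :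
    c • !![c, s * z; 0, 0] + s • !![s, -c * z; 0, 0] = !![1, 0; 0, 0] := by
  ext i j
  fin_cases i <;> fin_cases j
  · show c * c + s * s = 1
    linear_combination h
  · show c * (s * z) + s * (-c * z) = 0
    ring
  · show c * 0 + s * 0 = 0
    ring
  · show c * 0 + s * 0 = 0
    ring

theorem smul_add_neg_smul_kraus_eq_single (h : c ^ 2 + s ^ 2 = 1) (z : R) :
    s • !![c, s * z; 0, 0] + (-c) • !![s, -c * z; 0, 0] = !![0, z; 0, 0] := by
  ext i j
  fin_cases i <;> fin_cases j
  · show s * c + -c * s = 0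
    ring
  · show s * (s * z) + -c * (-c * z) = z
    linear_combination z * h
  · show s * 0 + -c * 0 = 0
    ring
  · show s * 0 + -c * 0 = 0
    ring

end KrausMixing

theorem stmt_11_general (θ φ : ℝ) :
    let K₁ : Matrix (Fin 2) (Fin 2) ℂ :=
      !![(Real.cos θ : ℂ), (Real.sin θ : ℂ) * Complex.exp (φ * Complex.I); 0, 0]
    let K₂ : Matrix (Fin 2) (Fin 2) ℂ :=
      !![(Real.sin θ : ℂ), -(Real.cos θ : ℂ) * Complex.exp (φ * Complex.I); 0, 0]
    (Real.cos θ : ℂ) • K₁ + (Real.sin θ : ℂ) • K₂ = !![1, 0; 0, 0] ∧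
    (Real.sin θ : ℂ) • K₁ + (-(Real.cos θ : ℂ)) • K₂ =
      !![0, Complex.exp (φ * Complex.I); 0, 0] := by
  have h : (Real.cos θ : ℂ) ^ 2 + (Real.sin θ : ℂ) ^ 2 = 1 := by
    exact_mod_cast Real.cos_sq_add_sin_sq θ
  exact ⟨smul_add_smul_kraus_eq_single h _, smul_add_neg_smul_kraus_eq_single h _⟩

theorem stmt_11 (θ φ : ℝ) (hθ : θ ∈ Set.Ioo 0 (Real.pi / 2)) :
    let K₁ : Matrix (Fin 2) (Fin 2) ℂ :=
      !![(Real.cos θ : ℂ), (Real.sin θ : ℂ) * Complex.exp (φ * Complex.I); 0, 0]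
    let K₂ : Matrix (Fin 2) (Fin 2) ℂ :=
      !![(Real.sin θ : ℂ), -(Real.cos θ : ℂ) * Complex.exp (φ * Complex.I); 0, 0]
    (Real.cos θ : ℂ) • K₁ + (Real.sin θ : ℂ) • K₂ = !![1, 0; 0, 0] ∧
    (Real.sin θ : ℂ) • K₁ + (-(Real.cos θ : ℂ)) • K₂ =
      !![0, Complex.exp (φ * Complex.I); 0, 0] :=
  stmt_11_general θ φ
end

section
/- Let K₁ = (1/2)[[1,1],[0,0]], K₂ = (1/2)[[0,0],[1,-1]], K₃ = (1/2)[[1,0],[0,-1]], K₄ = (1/2)[[0,1],[1,0]]. Then Σᵢ Kᵢ†Kᵢ = I, and the span of {K₁, K₂, K₃, K₄} over ℂ has dimension exactly 3 (so the channel has Kraus rank 3). -/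
/-!
The completeness relation is an entrywise computation. For the rank: K₄ = K₁ + K₂ − K₃, while
K₁, K₂, K₃ are linearly independent, as their entries at (0,0), (0,1), (1,0) already show.
-/

open Matrix

theorem finrank_span_insert_of_mem_span_triple {K V : Type*} [DivisionRing K] [AddCommGroup V]
    [Module K V] {a b c d : V} (hd : d ∈ Submodule.span K {a, b, c})
    (hind : LinearIndependent K ![a, b, c]) :
    Module.finrank K (Submodule.span K {a, b, c, d}) = 3 := by
  have hrange : Set.range ![a, b, c] = {a, b, c} := by
    simp only [range_cons, range_empty, Set.union_empty, Set.singleton_union]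
  have hset : ({a, b, c, d} : Set V) = insert d {a, b, c} := by
    rw [Set.pair_comm c d, Set.insert_comm b d, Set.insert_comm a d]
  rw [hset, Submodule.span_insert_eq_span hd, ← hrange, finrank_span_eq_card hind,
    Fintype.card_fin]

namespace KrausRankThreeChannel

noncomputable def K₁ : Matrix (Fin 2) (Fin 2) ℂ := (1 / 2 : ℂ) • !![1, 1; 0, 0]
noncomputable def K₂ : Matrix (Fin 2) (Fin 2) ℂ := (1 / 2 : ℂ) • !![0, 0; 1, -1]
noncomputable def K₃ : Matrix (Fin 2) (Fin 2) ℂ := (1 / 2 : ℂ) • !![1, 0; 0, -1]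
noncomputable def K₄ : Matrix (Fin 2) (Fin 2) ℂ := (1 / 2 : ℂ) • !![0, 1; 1, 0]

theorem sum_conjTranspose_mul_self :
    K₁ᴴ * K₁ + K₂ᴴ * K₂ + K₃ᴴ * K₃ + K₄ᴴ * K₄ = 1 := by
  ext i j
  fin_cases i <;> fin_cases j <;>
    simp [K₁, K₂, K₃, K₄, mul_apply, Fin.sum_univ_two, Complex.conj_ofNat] <;> ring

theorem K₄_mem_span : K₄ ∈ Submodule.span ℂ {K₁, K₂, K₃} :=
  Submodule.mem_span_triple.2
    ⟨1, 1, -1, by ext i j; fin_cases i <;> fin_cases j <;> simp [K₁, K₂, K₃, K₄]⟩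

theorem linearIndependent_K₁_K₂_K₃ : LinearIndependent ℂ ![K₁, K₂, K₃] := by
  rw [Fintype.linearIndependent_iff]
  intro g hg
  have h00 := congrFun (congrFun hg 0) 0
  have h01 := congrFun (congrFun hg 0) 1
  have h10 := congrFun (congrFun hg 1) 0
  simp [Fin.sum_univ_three, K₁, K₂, K₃] at h00 h01 h10
  intro i
  fin_cases i <;> simp_all

end KrausRankThreeChannel

theorem stmt_19 :
    let K₁ : Matrix (Fin 2) (Fin 2) ℂ := (1 / 2 : ℂ) • !![1, 1; 0, 0]
    let K₂ : Matrix (Fin 2) (Fin 2) ℂ := (1 / 2 : ℂ) • !![0, 0; 1, -1]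
    let K₃ : Matrix (Fin 2) (Fin 2) ℂ := (1 / 2 : ℂ) • !![1, 0; 0, -1]
    let K₄ : Matrix (Fin 2) (Fin 2) ℂ := (1 / 2 : ℂ) • !![0, 1; 1, 0]
    (K₁ᴴ * K₁ + K₂ᴴ * K₂ + K₃ᴴ * K₃ + K₄ᴴ * K₄ = 1) ∧
    Module.finrank ℂ (Submodule.span ℂ {K₁, K₂, K₃, K₄}) = 3 :=
  ⟨KrausRankThreeChannel.sum_conjTranspose_mul_self,
    finrank_span_insert_of_mem_span_triple KrausRankThreeChannel.K₄_mem_span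
      KrausRankThreeChannel.linearIndependent_K₁_K₂_K₃⟩
end
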